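/- Let A ⊆ ℝ² be Lebesgue measurable with ν₂(A) < ∞ and let λ_a > 0. Then, as λ_ℓ → ∞, exp( − λ_ℓ ∫_{0}^{2π} ∫_{0}^{∞} [ 1 − exp( − (λ_a/(π λ_ℓ)) · ν₁(L₍ρ,θ₎ ∩ A) ) ] dρ dθ ) converges to exp( − λ_a · ν₂(A) ). In other words, the void probability of the Cox process driven by a Poisson line process with density λ_ℓ in the representation space and per-line 1D Poisson intensity λ_p = λ_a/(π λ_ℓ) converges, as λ_ℓ → ∞ with the overall point density λ_a = π λ_ℓ λ_p held fixed, to the void probability exp(−λ_a ν₂(A)) of a homogeneous 2D Poisson point process with density λ_a. -/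

import Mathlib

/-!
For a fixed direction `θ`, the rotation `(ρ, t) ↦ R_θ (ρ, t)` preserves Lebesgue measure, so
`∫_ℝ ν₁(L₍ρ,θ₎ ∩ A) dρ = ν₂(A)`. Since `L₍ρ,θ+π₎ = L₍-ρ,θ₎`, the directions `θ` and `θ + π`
together sweep the whole plane once as `ρ` runs over `(0, ∞)`, whence
`∫_{0}^{2π} ∫_{0}^{∞} ν₁(L₍ρ,θ₎ ∩ A) dρ dθ = π ν₂(A)`.
As `λ_ℓ → ∞`, `λ_ℓ (1 - exp (-x / λ_ℓ)) → x` with `0 ≤ λ_ℓ (1 - exp (-x / λ_ℓ)) ≤ x`, so by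
dominated convergence the exponent tends to `(λ_a / π) · π ν₂(A) = λ_a ν₂(A)`.
-/

open MeasureTheory Filter Real

lemma setLIntegral_Ioi_add_setLIntegral_Ioi_comp_neg (f : ℝ → ENNReal) :
    (∫⁻ x in Set.Ioi 0, f x) + ∫⁻ x in Set.Ioi 0, f (-x) = ∫⁻ x, f x := by
  have hneg : ∫⁻ x in Set.Ioi 0, f (-x) = ∫⁻ x in Set.Iio 0, f x := by
    simpa using (Measure.measurePreserving_neg (volume : Measure ℝ)).setLIntegral_comp_preimage_emb
      (Homeomorph.neg ℝ).measurableEmbedding f (Set.Iio 0)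
  rw [hneg, add_comm, ← lintegral_union measurableSet_Ioi Set.Ioi_disjoint_Iio_same.symm,
    Set.Iio_union_Ioi, restrict_compl_singleton]

lemma setLIntegral_Ioo_zero_two_mul {f : ℝ → ENNReal} (hf : Measurable f) {T : ℝ} (hT : 0 < T) :
    ∫⁻ x in Set.Ioo 0 (2 * T), f x = ∫⁻ x in Set.Ioo 0 T, (f x + f (x + T)) := by
  have hshift : ∫⁻ x in Set.Ico T (2 * T), f x = ∫⁻ x in Set.Ioo 0 T, f (x + T) := by
    rw [setLIntegral_congr Ioo_ae_eq_Ico]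
    simpa [two_mul] using ((measurePreserving_add_right volume T).setLIntegral_comp_preimage_emb
      (Homeomorph.addRight T).measurableEmbedding f (Set.Ico T (2 * T))).symm
  rw [← Set.Ioo_union_Ico_eq_Ioo hT (by linarith), lintegral_union measurableSet_Ico
    (Set.Ico_disjoint_Ico_same.mono_left Set.Ioo_subset_Ico_self), hshift,
    lintegral_add_left hf]

lemma abs_one_sub_exp_neg_le {x : ℝ} (hx : 0 ≤ x) : |1 - exp (-x)| ≤ x := by
  rw [abs_of_nonneg (sub_nonneg.2 (exp_le_one_iff.2 (neg_nonpos.2 hx)))]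
  linarith [one_sub_le_exp_neg x]

lemma tendsto_mul_one_sub_exp_neg_div (k : ℝ) :
    Tendsto (fun l => l * (1 - exp (-(k / l)))) atTop (nhds k) := by
  have hbound : ∀ᶠ l in atTop, |l * (1 - exp (-(k / l))) - k| ≤ k ^ 2 / l := by
    filter_upwards [eventually_ge_atTop |k|, eventually_gt_atTop 0] with l hkl hl
    have hsmall : |-(k / l)| ≤ 1 := by
      rw [abs_neg, abs_div, abs_of_pos hl, div_le_one hl]
      exact hkl
    have hquad := abs_exp_sub_one_sub_id_le hsmall
    calc |l * (1 - exp (-(k / l))) - k| = l * |exp (-(k / l)) - 1 - -(k / l)| := by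
          rw [← abs_of_pos hl, ← abs_mul, abs_of_pos hl, ← abs_neg]
          congr 1
          field_simp
          ring
      _ ≤ l * (-(k / l)) ^ 2 := mul_le_mul_of_nonneg_left hquad hl.le
      _ = k ^ 2 / l := by field_simp
  have hlim : Tendsto (fun l : ℝ => k ^ 2 / l) atTop (nhds 0) :=
    tendsto_const_nhds.div_atTop tendsto_id
  rw [tendsto_iff_norm_sub_tendsto_zero]
  exact squeeze_zero' (.of_forall fun _ => norm_nonneg _) hbound hlim

section

variable {α : Type*} [MeasurableSpace α] {μ : Measure α} {f : α → ℝ} {c : ℝ}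

lemma integrable_one_sub_exp_neg_mul (hf : Integrable f μ) (hf0 : 0 ≤ᵐ[μ] f) (hc : 0 ≤ c) :
    Integrable (fun x => 1 - exp (-c * f x)) μ := by
  refine (hf.const_mul c).mono' (by fun_prop) ?_
  filter_upwards [hf0] with x hx
  rw [Real.norm_eq_abs, neg_mul]
  exact abs_one_sub_exp_neg_le (mul_nonneg hc hx)

lemma tendsto_mul_integral_one_sub_exp_neg_div_mul (hf : Integrable f μ) (hf0 : 0 ≤ᵐ[μ] f)
    (hc : 0 ≤ c) :
    Tendsto (fun l => l * ∫ x, (1 - exp (-(c / l) * f x)) ∂μ) atTop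
      (nhds (c * ∫ x, f x ∂μ)) := by
  simp_rw [← integral_const_mul]
  refine tendsto_integral_filter_of_dominated_convergence (fun x => c * f x)
    (.of_forall fun l => by fun_prop) ?_ (hf.const_mul c) ?_
  · filter_upwards [eventually_gt_atTop 0] with l hl
    filter_upwards [hf0] with x hx
    rw [Real.norm_eq_abs, abs_mul, abs_of_pos hl, neg_mul]
    calc l * |1 - exp (-(c / l * f x))| ≤ l * (c / l * f x) := by
          gcongr
          exact abs_one_sub_exp_neg_le (mul_nonneg (div_nonneg hc hl.le) hx)
      _ = c * f x := by field_simp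
  · refine .of_forall fun x => (tendsto_mul_one_sub_exp_neg_div (c * f x)).congr fun l => ?_
    rw [mul_div_right_comm, neg_mul]

end

noncomputable def planeRotation (θ : ℝ) :
    EuclideanSpace ℝ (Fin 2) ≃ₗᵢ[ℝ] EuclideanSpace ℝ (Fin 2) :=
  LinearIsometry.toLinearIsometryEquiv
    { toLinearMap := Matrix.toLpLin 2 2 !![cos θ, -sin θ; sin θ, cos θ]
      norm_map' := fun x => by
        simp only [EuclideanSpace.norm_eq, Fin.sum_univ_two, Real.norm_eq_abs, sq_abs]
        simp only [Matrix.toLpLin_apply, Matrix.cons_mulVec, dotProduct, Fin.sum_univ_two,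
          Matrix.cons_val_zero, Matrix.cons_val_one, Matrix.cons_val_fin_one, Matrix.empty_mulVec]
        congr 1
        linear_combination (x 0 ^ 2 + x 1 ^ 2) * sin_sq_add_cos_sq θ }
    rfl

@[simp] lemma planeRotation_apply_zero (θ : ℝ) (x : EuclideanSpace ℝ (Fin 2)) :
    planeRotation θ x 0 = cos θ * x 0 - sin θ * x 1 := by
  simp [planeRotation, Matrix.toLpLin_apply, dotProduct, Fin.sum_univ_two, sub_eq_add_neg]

@[simp] lemma planeRotation_apply_one (θ : ℝ) (x : EuclideanSpace ℝ (Fin 2)) :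
    planeRotation θ x 1 = sin θ * x 0 + cos θ * x 1 := by
  simp [planeRotation, Matrix.toLpLin_apply, dotProduct, Fin.sum_univ_two]

/-- The arc-length parametrisation of the line `L₍ρ,θ₎`. -/
noncomputable def linePoint (θ ρ t : ℝ) : EuclideanSpace ℝ (Fin 2) := planeRotation θ !₂[ρ, t]

@[simp] lemma linePoint_apply_zero (θ ρ t : ℝ) : linePoint θ ρ t 0 = cos θ * ρ - sin θ * t := by
  simp [linePoint]

@[simp] lemma linePoint_apply_one (θ ρ t : ℝ) : linePoint θ ρ t 1 = sin θ * ρ + cos θ * t := by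
  simp [linePoint]

lemma isometry_linePoint (θ ρ : ℝ) : Isometry (linePoint θ ρ) := by
  refine (planeRotation θ).isometry.comp (Isometry.of_dist_eq fun s t => ?_)
  simp [EuclideanSpace.dist_eq, Fin.sum_univ_two, Real.dist_eq, Real.sqrt_sq_eq_abs]

lemma range_linePoint (θ ρ : ℝ) :
    Set.range (linePoint θ ρ) = {p | p 0 * cos θ + p 1 * sin θ = ρ} := by
  ext p
  constructor
  · rintro ⟨t, rfl⟩
    simp only [Set.mem_ofPred_eq, linePoint_apply_zero, linePoint_apply_one]
    linear_combination ρ * sin_sq_add_cos_sq θ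
  · intro (hp : p 0 * cos θ + p 1 * sin θ = ρ)
    refine ⟨p 1 * cos θ - p 0 * sin θ, ?_⟩
    ext i
    fin_cases i
    · simp only [Fin.zero_eta, linePoint_apply_zero]
      linear_combination (-cos θ) * hp + p 0 * sin_sq_add_cos_sq θ
    · simp only [Fin.mk_one, linePoint_apply_one]
      linear_combination (-sin θ) * hp + p 1 * sin_sq_add_cos_sq θ

lemma linePoint_add_pi (θ ρ t : ℝ) : linePoint (θ + π) ρ t = linePoint θ (-ρ) (-t) := by
  ext i
  fin_cases i <;> simp

lemma continuous_linePoint : Continuous fun w : (ℝ × ℝ) × ℝ => linePoint w.1.1 w.1.2 w.2 := by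
  have hcoord (i : Fin 2) : Continuous fun w : (ℝ × ℝ) × ℝ => linePoint w.1.1 w.1.2 w.2 i := by
    fin_cases i <;>
      simp only [Fin.zero_eta, Fin.mk_one, linePoint_apply_zero, linePoint_apply_one] <;> fun_prop
  exact (PiLp.continuous_toLp 2 _).comp (continuous_pi hcoord)

lemma measurePreserving_linePoint (θ : ℝ) :
    MeasurePreserving (fun z : ℝ × ℝ => linePoint θ z.1 z.2) :=
  (planeRotation θ).measurePreserving.comp
    ((PiLp.volume_preserving_toLp (Fin 2)).comp (volume_preserving_finTwoArrow ℝ).symm)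

lemma hausdorffMeasure_line_inter (A : Set (EuclideanSpace ℝ (Fin 2))) (θ ρ : ℝ) :
    μH[1] ({p : EuclideanSpace ℝ (Fin 2) | p 0 * cos θ + p 1 * sin θ = ρ} ∩ A) =
      volume (linePoint θ ρ ⁻¹' A) := by
  rw [← range_linePoint, Set.inter_comm, ← Set.image_preimage_eq_inter_range,
    (isometry_linePoint θ ρ).hausdorffMeasure_image (Or.inl zero_le_one), hausdorffMeasure_real]

section Crofton

variable {A : Set (EuclideanSpace ℝ (Fin 2))}

lemma lintegral_volume_preimage_linePoint (hA : MeasurableSet A) (θ : ℝ) :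
    ∫⁻ ρ, volume (linePoint θ ρ ⁻¹' A) = volume A := by
  have hS : MeasurableSet ((fun z : ℝ × ℝ => linePoint θ z.1 z.2) ⁻¹' A) :=
    (measurePreserving_linePoint θ).measurable hA
  rw [← (measurePreserving_linePoint θ).measure_preimage hA.nullMeasurableSet,
    Measure.volume_eq_prod, Measure.prod_apply hS]
  rfl

lemma measurable_volume_preimage_linePoint (hA : MeasurableSet A) :
    Measurable fun z : ℝ × ℝ => volume (linePoint z.1 z.2 ⁻¹' A) :=
  measurable_measure_prodMk_left (continuous_linePoint.measurable hA)

lemma volume_preimage_linePoint_add_pi (θ ρ : ℝ) :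
    volume (linePoint (θ + π) ρ ⁻¹' A) = volume (linePoint θ (-ρ) ⁻¹' A) := by
  simp only [Set.preimage, linePoint_add_pi]
  exact Measure.measure_preimage_neg volume (linePoint θ (-ρ) ⁻¹' A)

lemma lintegral_prod_Ioo_Ioi_volume_preimage_linePoint (hA : MeasurableSet A) :
    ∫⁻ z, volume (linePoint z.1 z.2 ⁻¹' A)
        ∂(volume.restrict (Set.Ioo 0 (2 * π))).prod (volume.restrict (Set.Ioi 0)) =
      ENNReal.ofReal π * volume A := by
  have hm := measurable_volume_preimage_linePoint hA
  rw [lintegral_prod _ hm.aemeasurable,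
    setLIntegral_Ioo_zero_two_mul hm.lintegral_prod_right' pi_pos]
  simp only [volume_preimage_linePoint_add_pi, setLIntegral_Ioi_add_setLIntegral_Ioi_comp_neg,
    lintegral_volume_preimage_linePoint hA, setLIntegral_const, Real.volume_Ioo, sub_zero]
  exact mul_comm _ _

end Crofton

theorem cox_void_probability_tendsto_ppp_void_probability
    (A : Set (EuclideanSpace ℝ (Fin 2))) (hA : MeasurableSet A)
    (hA_fin : volume A < ⊤) (lam_a : ℝ) (hlam_a : 0 < lam_a) :
    Tendsto (fun lamL : ℝ =>
        Real.exp (-(lamL *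
          ∫ θ in Set.Ioo (0 : ℝ) (2 * π), ∫ ρ in Set.Ioi (0 : ℝ),
            (1 - Real.exp (-(lam_a / (π * lamL)) *
              (μH[1] ({p : EuclideanSpace ℝ (Fin 2) |
                p 0 * Real.cos θ + p 1 * Real.sin θ = ρ} ∩ A)).toReal)))))
      atTop (nhds (Real.exp (-(lam_a * (volume A).toReal)))) := by
  set P := (volume.restrict (Set.Ioo 0 (2 * π))).prod (volume.restrict (Set.Ioi (0 : ℝ)))
  set m : ℝ × ℝ → ENNReal := fun z => volume (linePoint z.1 z.2 ⁻¹' A)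
  have hm_meas : Measurable m := measurable_volume_preimage_linePoint hA
  have hm_lintegral : ∫⁻ z, m z ∂P = ENNReal.ofReal π * volume A :=
    lintegral_prod_Ioo_Ioi_volume_preimage_linePoint hA
  have hm_fin : ∫⁻ z, m z ∂P ≠ ⊤ := by
    rw [hm_lintegral]
    exact ENNReal.mul_ne_top ENNReal.ofReal_ne_top hA_fin.ne
  have hm_int : Integrable (fun z => (m z).toReal) P :=
    integrable_toReal_of_lintegral_ne_top hm_meas.aemeasurable hm_fin
  have hm_integral : ∫ z, (m z).toReal ∂P = π * (volume A).toReal := by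
    rw [integral_toReal hm_meas.aemeasurable (ae_lt_top hm_meas hm_fin), hm_lintegral,
      ENNReal.toReal_mul, ENNReal.toReal_ofReal pi_pos.le]
  have hc : 0 ≤ lam_a / π := (div_pos hlam_a pi_pos).le
  have hlim := tendsto_mul_integral_one_sub_exp_neg_div_mul hm_int
    (.of_forall fun _ => ENNReal.toReal_nonneg) hc
  rw [hm_integral, ← mul_assoc, div_mul_cancel₀ _ pi_pos.ne'] at hlim
  refine ((continuous_exp.tendsto _).comp hlim.neg).congr' ?_
  filter_upwards [eventually_gt_atTop 0] with l hl
  simp only [Function.comp_apply, hausdorffMeasure_line_inter, ← div_div]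
  rw [integral_integral (integrable_one_sub_exp_neg_mul hm_int
    (.of_forall fun _ => ENNReal.toReal_nonneg) (div_nonneg hc hl.le))]
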